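/- Let τ > 0, and suppose h : ℝ³ → ℝ satisfies |h(y)| ≤ D (|y| s_τ(y))^{−2} ln(2+|y|) for |y| ≥ S (for some constants D, S > 0). Then h restricted to ℝ³ ∖ B_S belongs to L^q(ℝ³ ∖ B_S) for every q > 1. -/

import Mathlib

open MeasureTheory

noncomputable def sTau (τ : ℝ) (x : EuclideanSpace ℝ (Fin 3)) : ℝ := 1 + τ * (‖x‖ - x 0)

/-!
Write `y = (t, y')` with `t = y 0`. For `|y| ≥ S` one has `|y| s_τ(y) ≥ |y| + τ |y'|² / 2`
(because `2|y|(|y| - t) ≥ |y'|²`) and `|y| ≳ 1 + |t|`, while `log (2 + |y|) ≲ |y|^ε`.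
So the bound is dominated by `(1 + |t|)^(ε - 1) (1 + |y'|)^(-2)`, a product weight on `ℝ × ℝ²`
whose `q`-th power is integrable as soon as `(1 - ε) q > 1`.
-/

open Real Module

section ProductWeight

variable {E F : Type*} [NormedAddCommGroup E] [NormedSpace ℝ E] [FiniteDimensional ℝ E]
  [MeasurableSpace E] [BorelSpace E] {μ : Measure E} [μ.IsAddHaarMeasure]
  [NormedAddCommGroup F] [NormedSpace ℝ F] [FiniteDimensional ℝ F]
  [MeasurableSpace F] [BorelSpace F] {ν : Measure F} [ν.IsAddHaarMeasure]

theorem memLp_one_add_norm_rpow_neg_mul_prod {a b q : ℝ} (hq : 0 < q)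
    (ha : (finrank ℝ E : ℝ) < q * a) (hb : (finrank ℝ F : ℝ) < q * b) :
    MemLp (fun z : E × F => (1 + ‖z.1‖) ^ (-a) * (1 + ‖z.2‖) ^ (-b))
      (ENNReal.ofReal q) (μ.prod ν) := by
  rw [← integrable_norm_rpow_iff (by fun_prop) (by simpa using hq) ENNReal.ofReal_ne_top,
    ENNReal.toReal_ofReal hq.le]
  refine ((integrable_one_add_norm (μ := μ) ha).mul_prod
    (integrable_one_add_norm (μ := ν) hb)).congr (ae_of_all _ fun z => ?_)
  have h₁ : 0 ≤ 1 + ‖z.1‖ := by positivity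
  have h₂ : 0 ≤ 1 + ‖z.2‖ := by positivity
  simp only [norm_mul, norm_of_nonneg (rpow_nonneg h₁ _), norm_of_nonneg (rpow_nonneg h₂ _),
    mul_rpow (rpow_nonneg h₁ _) (rpow_nonneg h₂ _), ← rpow_mul h₁, ← rpow_mul h₂]
  ring_nf

end ProductWeight

theorem Real.log_two_add_le_rpow {S ε r : ℝ} (hS : 0 < S) (hε : 0 < ε) (hr : S ≤ r) :
    log (2 + r) ≤ ε⁻¹ * (1 + 2 / S) ^ ε * r ^ ε := by
  have hr₀ : 0 ≤ r := hS.le.trans hr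
  have h2r : 2 + r ≤ (1 + 2 / S) * r := by
    have : 2 ≤ 2 / S * r := by rw [div_mul_eq_mul_div, le_div_iff₀ hS]; linarith
    linarith
  calc log (2 + r) ≤ (2 + r) ^ ε / ε := log_le_rpow_div (by linarith) hε
    _ ≤ ((1 + 2 / S) * r) ^ ε / ε := by gcongr
    _ = ε⁻¹ * (1 + 2 / S) ^ ε * r ^ ε := by
      rw [mul_rpow (by positivity) hr₀]; ring

theorem min_one_div_two_mul_one_add_abs_le {S r t : ℝ} (hr : S ≤ r) (ht : |t| ≤ r) :
    min 1 S / 2 * (1 + |t|) ≤ r := by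
  have : min 1 S * |t| ≤ |t| := mul_le_of_le_one_left (abs_nonneg t) (min_le_left _ _)
  nlinarith [min_le_right 1 S]

/-- `r (1 + τ (r - t)) ≥ r + τ m² / 2`, because `2 r (r - t) ≥ r² - t² ≥ m²`. -/
theorem mul_one_add_sq_le_sq_mul_one_add_mul_sub {τ S r t m : ℝ} (hτ : 0 < τ) (hS : 0 < S)
    (hr : S ≤ r) (htm : t ^ 2 + m ^ 2 ≤ r ^ 2) :
    min S (τ / 2) / 2 * r * (1 + m) ^ 2 ≤ (r * (1 + τ * (r - t))) ^ 2 := by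
  have hr₀ : 0 < r := hS.trans_le hr
  have htr : t ≤ r := (abs_le_of_sq_le_sq' (by linarith [sq_nonneg m]) hr₀.le).2
  set κ := min S (τ / 2)
  have hκ : 0 < κ := lt_min hS (by positivity)
  have hm : τ * m ^ 2 ≤ 2 * (τ * (r * (r - t))) := by nlinarith [sq_nonneg (r - t)]
  have hA : κ * (1 + m) ^ 2 / 2 ≤ r * (1 + τ * (r - t)) := by
    nlinarith [min_le_left S (τ / 2), min_le_right S (τ / 2), sq_nonneg (1 - m)]
  have hrA : r ≤ r * (1 + τ * (r - t)) := le_mul_of_one_le_right hr₀.le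
    (by nlinarith [mul_nonneg hτ.le (sub_nonneg.2 htr)])
  calc κ / 2 * r * (1 + m) ^ 2 = r * (κ * (1 + m) ^ 2 / 2) := by ring
    _ ≤ r * (1 + τ * (r - t)) * (r * (1 + τ * (r - t))) := by gcongr
    _ = _ := by ring

theorem exists_rpow_neg_two_mul_log_le {τ S ε : ℝ} (hτ : 0 < τ) (hS : 0 < S) (hε : 0 < ε)
    (hε₁ : ε ≤ 1) :
    ∃ C, ∀ r t m : ℝ, S ≤ r → 0 ≤ m → t ^ 2 + m ^ 2 ≤ r ^ 2 →
      (r * (1 + τ * (r - t))) ^ (-2 : ℝ) * log (2 + r) ≤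
        C * ((1 + |t|) ^ (-(1 - ε)) * (1 + m) ^ (-2 : ℝ)) := by
  set c := min 1 S / 2
  set κ := min S (τ / 2) / 2
  set K := ε⁻¹ * (1 + 2 / S) ^ ε
  have hc : 0 < c := half_pos (lt_min one_pos hS)
  have hκ : 0 < κ := half_pos (lt_min hS (half_pos hτ))
  refine ⟨K / κ * c ^ (ε - 1), fun r t m hr hm htm => ?_⟩
  have hr₀ : 0 < r := hS.trans_le hr
  have ht : |t| ≤ r := abs_le_of_sq_le_sq (by nlinarith) hr₀.le
  have hs : 0 ≤ 1 + τ * (r - t) := by nlinarith [le_abs_self t]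
  have hA : (r * (1 + τ * (r - t))) ^ (-2 : ℝ) ≤ (κ * r * (1 + m) ^ 2)⁻¹ := by
    rw [rpow_neg (by positivity), rpow_two]
    exact inv_anti₀ (by positivity) (mul_one_add_sq_le_sq_mul_one_add_mul_sub hτ hS hr htm)
  calc (r * (1 + τ * (r - t))) ^ (-2 : ℝ) * log (2 + r)
      ≤ (κ * r * (1 + m) ^ 2)⁻¹ * (K * r ^ ε) := by
        gcongr
        · exact log_nonneg (by linarith)
        · exact log_two_add_le_rpow hS hε hr
    _ = K / κ * r ^ (ε - 1) * (1 + m) ^ (-2 : ℝ) := by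
        rw [rpow_sub_one hr₀.ne', rpow_neg (by positivity), rpow_two]
        field_simp
    _ ≤ K / κ * (c * (1 + |t|)) ^ (ε - 1) * (1 + m) ^ (-2 : ℝ) := by
        have := rpow_le_rpow_of_nonpos (by positivity) (min_one_div_two_mul_one_add_abs_le hr ht)
          (sub_nonpos.2 hε₁)
        gcongr
    _ = K / κ * c ^ (ε - 1) * ((1 + |t|) ^ (-(1 - ε)) * (1 + m) ^ (-2 : ℝ)) := by
        rw [mul_rpow hc.le (by positivity), neg_sub]; ring

/-- `y ↦ (y 0, (y 1, …, y n))`, with the sup norm on the second factor. -/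
noncomputable def EuclideanSpace.splitFirst (n : ℕ) :
    EuclideanSpace ℝ (Fin (n + 1)) ≃ᵐ ℝ × (Fin n → ℝ) :=
  (MeasurableEquiv.toLp 2 (Fin (n + 1) → ℝ)).symm.trans
    (MeasurableEquiv.piFinSuccAbove (fun _ => ℝ) 0)

theorem EuclideanSpace.measurePreserving_splitFirst (n : ℕ) :
    MeasurePreserving (splitFirst n) :=
  (volume_preserving_piFinSuccAbove (fun _ => ℝ) 0).comp
    (EuclideanSpace.volume_preserving_symm_measurableEquiv_toLp (Fin (n + 1)))

theorem EuclideanSpace.sq_splitFirst_add_sq_norm_le {n : ℕ} (y : EuclideanSpace ℝ (Fin (n + 1))) :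
    (splitFirst n y).1 ^ 2 + ‖(splitFirst n y).2‖ ^ 2 ≤ ‖y‖ ^ 2 := by
  change y 0 ^ 2 + ‖fun j : Fin n => y j.succ‖ ^ 2 ≤ ‖y‖ ^ 2
  have htail : ‖fun j : Fin n => y j.succ‖ ≤ √(∑ j : Fin n, y j.succ ^ 2) :=
    (pi_norm_le_iff_of_nonneg (sqrt_nonneg _)).2 fun j => by
      rw [norm_eq_abs]
      exact abs_le_sqrt (Finset.single_le_sum (fun i _ => sq_nonneg (y i.succ))
        (Finset.mem_univ j))
  rw [EuclideanSpace.norm_sq_eq, Fin.sum_univ_succ]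
  simp only [norm_eq_abs, sq_abs]
  gcongr
  calc ‖fun j : Fin n => y j.succ‖ ^ 2 ≤ √(∑ j : Fin n, y j.succ ^ 2) ^ 2 := by gcongr
    _ = _ := sq_sqrt (Finset.sum_nonneg fun i _ => sq_nonneg _)

theorem one_le_sTau {τ : ℝ} (hτ : 0 ≤ τ) (x : EuclideanSpace ℝ (Fin 3)) : 1 ≤ sTau τ x :=
  le_add_of_nonneg_right <| mul_nonneg hτ <| sub_nonneg.2 <|
    (le_abs_self _).trans (PiLp.norm_apply_le x 0)

theorem gradient_remainder_memLp_general (τ D S : ℝ) (hτ : 0 < τ) (hS : 0 < S)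
    (h : EuclideanSpace ℝ (Fin 3) → ℝ) (hh : Measurable h)
    (hbound : ∀ y : EuclideanSpace ℝ (Fin 3), S ≤ ‖y‖ →
      |h y| ≤ D * (‖y‖ * sTau τ y) ^ (-(2:ℝ)) * Real.log (2 + ‖y‖))
    (q : ℝ) (hq : 1 < q) :
    MemLp h (ENNReal.ofReal q)
      (volume.restrict {y : EuclideanSpace ℝ (Fin 3) | S ≤ ‖y‖}) := by
  have hq₀ : 0 < q := by linarith
  set ε := (q - 1) / (2 * q)
  obtain ⟨C, hC⟩ := exists_rpow_neg_two_mul_log_le hτ hS (ε := ε) (by positivity)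
    (by rw [div_le_one (by positivity)]; linarith)
  have ha : (finrank ℝ ℝ : ℝ) < q * (1 - ε) := by
    have : q * (1 - ε) = (q + 1) / 2 := by simp only [ε]; field_simp; ring
    rw [finrank_self, Nat.cast_one, this]; linarith
  have hb : (finrank ℝ (Fin 2 → ℝ) : ℝ) < q * 2 := by
    rw [finrank_fin_fun]; push_cast; linarith
  have hG := (memLp_one_add_norm_rpow_neg_mul_prod (μ := volume) (ν := volume) hq₀ ha hb
    ).comp_measurePreserving (EuclideanSpace.measurePreserving_splitFirst 2)
  refine (hG.restrict _).of_le_mul (c := |D| * C) hh.aestronglyMeasurable ?_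
  filter_upwards [ae_restrict_mem (isClosed_le continuous_const continuous_norm).measurableSet]
    with y hy
  have hX := hC ‖y‖ (y 0) _ hy (norm_nonneg _) (EuclideanSpace.sq_splitFirst_add_sq_norm_le y)
  calc ‖h y‖ ≤ D * ((‖y‖ * sTau τ y) ^ (-(2:ℝ)) * log (2 + ‖y‖)) := by
        rw [← mul_assoc]; exact hbound y hy
    _ ≤ |D| * ((‖y‖ * sTau τ y) ^ (-(2:ℝ)) * log (2 + ‖y‖)) := by
        refine mul_le_mul_of_nonneg_right (le_abs_self D) (mul_nonneg (rpow_nonneg ?_ _) ?_)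
        · exact mul_nonneg (norm_nonneg y) (zero_le_one.trans (one_le_sTau hτ.le y))
        · exact log_nonneg (by linarith [norm_nonneg y])
    _ ≤ |D| * (C * ((1 + |y 0|) ^ (-(1 - ε)) * (1 + ‖(EuclideanSpace.splitFirst 2 y).2‖) ^ (-2 : ℝ))) :=
        mul_le_mul_of_nonneg_left hX (abs_nonneg D)
    _ = |D| * C * ‖_‖ := by
        rw [mul_assoc, Function.comp_apply, norm_of_nonneg (by positivity)]
        rfl

theorem gradient_remainder_memLp (τ D S : ℝ) (hτ : 0 < τ) (hD : 0 < D) (hS : 0 < S)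
    (h : EuclideanSpace ℝ (Fin 3) → ℝ) (hh : Measurable h)
    (hbound : ∀ y : EuclideanSpace ℝ (Fin 3), S ≤ ‖y‖ →
      |h y| ≤ D * (‖y‖ * sTau τ y) ^ (-(2:ℝ)) * Real.log (2 + ‖y‖))
    (q : ℝ) (hq : 1 < q) :
    MemLp h (ENNReal.ofReal q)
      (volume.restrict {y : EuclideanSpace ℝ (Fin 3) | S ≤ ‖y‖}) :=
  gradient_remainder_memLp_general τ D S hτ hS h hh hbound q hq
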